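/- arXiv:1001.1994 — 6 statements merged into one kernel-verified Lean document; each statement's English description precedes it below -/
import Mathlib

section
/- For the Egorov metric g_f on ℝⁿ, the only nonvanishing components of the (0,4)-curvature tensor in the coordinate frame are R_{inin} = (1/(4f))((f')² - 2ff'') for i = 1,…,n-2 (up to the symmetries of the curvature tensor). -/
noncomputable section

/-- Partial derivative of a function on `ℝⁿ` in the `a`-th coordinate direction. -/
def pd {N : ℕ} (a : Fin N) (h : (Fin N → ℝ) → ℝ) (x : Fin N → ℝ) : ℝ :=
  deriv (fun t => h (Function.update x a t)) (x a)

/-- The index of the coordinate `x_n` (dimension `n = m+3`). -/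
def lastIdx (m : ℕ) : Fin (m + 3) := ⟨m + 2, by omega⟩

/-- The index of the coordinate `x_{n-1}`. -/
def penIdx (m : ℕ) : Fin (m + 3) := ⟨m + 1, by omega⟩

/-- The Egorov metric `g_f = f(x_n) Σ_{i=1}^{n-2} (dx_i)² + 2 dx_{n-1} dx_n` on `ℝⁿ`, `n = m+3`. -/
def gE (m : ℕ) (f : ℝ → ℝ) (x : Fin (m + 3) → ℝ) (i j : Fin (m + 3)) : ℝ :=
  if i = j ∧ (i : ℕ) < m + 1 then f (x (lastIdx m))
  else if (i = penIdx m ∧ j = lastIdx m) ∨ (i = lastIdx m ∧ j = penIdx m) then 1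
  else 0

/-- Christoffel symbols `Γ^k_{ij}` of the Egorov metric:
`∇_{∂_i}∂_i = -(f'/2)∂_{n-1}`, `∇_{∂_i}∂_n = (f'/(2f))∂_i` for spatial `i`, all others zero. -/
def ΓE (m : ℕ) (f : ℝ → ℝ) (x : Fin (m + 3) → ℝ) (k i j : Fin (m + 3)) : ℝ :=
  if (i : ℕ) < m + 1 ∧ j = i ∧ k = penIdx m then -(deriv f (x (lastIdx m)) / 2)
  else if (i : ℕ) < m + 1 ∧ j = lastIdx m ∧ k = i then
    deriv f (x (lastIdx m)) / (2 * f (x (lastIdx m)))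
  else if (j : ℕ) < m + 1 ∧ i = lastIdx m ∧ k = j then
    deriv f (x (lastIdx m)) / (2 * f (x (lastIdx m)))
  else 0

/-- Component on `∂_l` of `R(∂_i,∂_j)∂_k`, with the sign convention
`R(X,Y) = ∇_{[X,Y]} - [∇_X, ∇_Y]` (in coordinates `[∂_i,∂_j] = 0`). -/
def RopE (m : ℕ) (f : ℝ → ℝ) (x : Fin (m + 3) → ℝ) (i j k l : Fin (m + 3)) : ℝ :=
  -(pd i (fun y => ΓE m f y l j k) x - pd j (fun y => ΓE m f y l i k) x
    + ∑ s, (ΓE m f x l i s * ΓE m f x s j k - ΓE m f x l j s * ΓE m f x s i k))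

/-- The (0,4)-curvature tensor `R(∂_i,∂_j,∂_k,∂_h) = ⟨R(∂_i,∂_j)∂_k, ∂_h⟩`. -/
def R4E (m : ℕ) (f : ℝ → ℝ) (x : Fin (m + 3) → ℝ) (i j k h : Fin (m + 3)) : ℝ :=
  ∑ l, RopE m f x i j k l * gE m f x l h

/-- Ricci tensor `Ric(X,Y) = trace (Z ↦ R(X,Z)Y)`. -/
def RicE (m : ℕ) (f : ℝ → ℝ) (x : Fin (m + 3) → ℝ) (i j : Fin (m + 3)) : ℝ :=
  ∑ k, RopE m f x i k j k

/-- Covariant derivative `(∇_{∂_a} R)(∂_i,∂_j,∂_k,∂_h)` of the (0,4)-curvature tensor. -/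
def covR4E (m : ℕ) (f : ℝ → ℝ) (x : Fin (m + 3) → ℝ) (a i j k h : Fin (m + 3)) : ℝ :=
  pd a (fun y => R4E m f y i j k h) x
    - ∑ s, (ΓE m f x s a i * R4E m f x s j k h + ΓE m f x s a j * R4E m f x i s k h
      + ΓE m f x s a k * R4E m f x i j s h + ΓE m f x s a h * R4E m f x i j k s)

/-- Covariant derivative `(∇_{∂_a} Ric)(∂_i,∂_j)` of the Ricci tensor. -/
def covRicE (m : ℕ) (f : ℝ → ℝ) (x : Fin (m + 3) → ℝ) (a i j : Fin (m + 3)) : ℝ :=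
  pd a (fun y => RicE m f y i j) x
    - ∑ s, (ΓE m f x s a i * RicE m f x s j + ΓE m f x s a j * RicE m f x i s)

/-- Covariant derivative of the curvature operator, `(∇_{∂_a} R)(∂_i,∂_j)∂_k` component `l`. -/
def covRopE (m : ℕ) (f : ℝ → ℝ) (x : Fin (m + 3) → ℝ) (a i j k l : Fin (m + 3)) : ℝ :=
  pd a (fun y => RopE m f y i j k l) x
    + ∑ s, (ΓE m f x l a s * RopE m f x i j k s - ΓE m f x s a i * RopE m f x s j k l
      - ΓE m f x s a j * RopE m f x i s k l - ΓE m f x s a k * RopE m f x i j s l)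

/-- The matrix of the curvature operator `R(u,v)` in the coordinate frame. -/
def RMatE (m : ℕ) (f : ℝ → ℝ) (x : Fin (m + 3) → ℝ) (u v : Fin (m + 3) → ℝ) :
    Matrix (Fin (m + 3)) (Fin (m + 3)) ℝ :=
  Matrix.of fun l k => ∑ i, ∑ j, u i * v j * RopE m f x i j k l

/-- The matrix of the Jacobi operator `J_u = R(u,·)u` in the coordinate frame. -/
def JMatE (m : ℕ) (f : ℝ → ℝ) (x : Fin (m + 3) → ℝ) (u : Fin (m + 3) → ℝ) :
    Matrix (Fin (m + 3)) (Fin (m + 3)) ℝ :=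
  Matrix.of fun l k => ∑ i, ∑ j, u i * u j * RopE m f x i k j l

/-- The matrix of the Szabó operator `S_u = (∇_u R)(u,·)u` in the coordinate frame. -/
def SMatE (m : ℕ) (f : ℝ → ℝ) (x : Fin (m + 3) → ℝ) (u : Fin (m + 3) → ℝ) :
    Matrix (Fin (m + 3)) (Fin (m + 3)) ℝ :=
  Matrix.of fun l k => ∑ a, ∑ i, ∑ j, u a * u i * u j * covRopE m f x a i k j l

/-- The inner product of tangent vectors with respect to the Egorov metric. -/
def gdotE (m : ℕ) (f : ℝ → ℝ) (x : Fin (m + 3) → ℝ) (u v : Fin (m + 3) → ℝ) : ℝ :=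
  ∑ i, ∑ j, gE m f x i j * u i * v j

/-- The scalar function `((f')² - 2 f f'')/(4 f²)`. -/
def cE (f : ℝ → ℝ) (t : ℝ) : ℝ :=
  ((deriv f t) ^ 2 - 2 * f t * deriv (deriv f) t) / (4 * (f t) ^ 2)

/-- The matrix of the Ricci operator: only nonzero entry at position `(n-1, n)`. -/
def QMatE (m : ℕ) (f : ℝ → ℝ) (x : Fin (m + 3) → ℝ) :
    Matrix (Fin (m + 3)) (Fin (m + 3)) ℝ :=
  Matrix.of fun i j =>
    if i = penIdx m ∧ j = lastIdx m then ((m : ℝ) + 1) * cE f (x (lastIdx m)) else 0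

namespace Egorov

@[simp] lemma penIdx_val (m : ℕ) : ((penIdx m : Fin (m+3)) : ℕ) = m + 1 := rfl
@[simp] lemma lastIdx_val (m : ℕ) : ((lastIdx m : Fin (m+3)) : ℕ) = m + 2 := rfl

lemma pen_ne_last (m : ℕ) : ¬ (penIdx m = lastIdx m) := by
  simp [Fin.ext_iff]
lemma last_ne_pen (m : ℕ) : ¬ (lastIdx m = penIdx m) := by
  simp [Fin.ext_iff]
lemma pen_not_lt (m : ℕ) : ¬ ((penIdx m : ℕ) < m + 1) := by simp
lemma last_not_lt (m : ℕ) : ¬ ((lastIdx m : ℕ) < m + 1) := by simp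
lemma ne_last_of_lt {m : ℕ} {i : Fin (m+3)} (h : (i : ℕ) < m + 1) : ¬ (i = lastIdx m) := by
  simp [Fin.ext_iff]; omega
lemma last_ne_of_lt {m : ℕ} {i : Fin (m+3)} (h : (i : ℕ) < m + 1) : ¬ (lastIdx m = i) := by
  simp [Fin.ext_iff]; omega
lemma ne_pen_of_lt {m : ℕ} {i : Fin (m+3)} (h : (i : ℕ) < m + 1) : ¬ (i = penIdx m) := by
  simp [Fin.ext_iff]; omega
lemma pen_ne_of_lt {m : ℕ} {i : Fin (m+3)} (h : (i : ℕ) < m + 1) : ¬ (penIdx m = i) := by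
  simp [Fin.ext_iff]; omega

lemma idx3 (m : ℕ) (i : Fin (m+3)) : (i : ℕ) < m + 1 ∨ i = penIdx m ∨ i = lastIdx m := by
  have := i.isLt
  simp only [Fin.ext_iff, penIdx_val, lastIdx_val]
  omega

lemma pd_comp {N : ℕ} (a b : Fin N) (g : ℝ → ℝ) (x : Fin N → ℝ) :
    pd a (fun y => g (y b)) x = if a = b then deriv g (x b) else 0 := by
  unfold pd
  split_ifs with h
  · subst h; simp only [Function.update_self]
  · have hc : (fun t => g (Function.update x a t b)) = fun _ => g (x b) := by
      funext t; rw [Function.update_of_ne (Ne.symm h)]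
    rw [hc, deriv_const]

variable (m : ℕ) (f : ℝ → ℝ)

def A (x : Fin (m+3) → ℝ) : ℝ := -(deriv f (x (lastIdx m)) / 2)
def B (x : Fin (m+3) → ℝ) : ℝ := deriv f (x (lastIdx m)) / (2 * f (x (lastIdx m)))

def Γf (k i j : Fin (m+3)) : ℝ → ℝ := fun t =>
  if (i : ℕ) < m + 1 ∧ j = i ∧ k = penIdx m then -(deriv f t / 2)
  else if (i : ℕ) < m + 1 ∧ j = lastIdx m ∧ k = i then deriv f t / (2 * f t)
  else if (j : ℕ) < m + 1 ∧ i = lastIdx m ∧ k = j then deriv f t / (2 * f t)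
  else 0

lemma ΓE_eq_comp (k i j : Fin (m+3)) :
    (fun y : Fin (m+3) → ℝ => ΓE m f y k i j) = fun y => Γf m f k i j (y (lastIdx m)) := rfl

def D (t : ℝ) : ℝ :=
  (deriv (deriv f) t * (2 * f t) - deriv f t * (2 * deriv f t)) / (2 * f t) ^ 2

def dΓ (k i j : Fin (m+3)) (t : ℝ) : ℝ :=
  if (i : ℕ) < m + 1 ∧ j = i ∧ k = penIdx m then -(deriv (deriv f) t / 2)
  else if (i : ℕ) < m + 1 ∧ j = lastIdx m ∧ k = i then D f t
  else if (j : ℕ) < m + 1 ∧ i = lastIdx m ∧ k = j then D f t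
  else 0

lemma deriv_Γf (hf : ContDiff ℝ (⊤ : ℕ∞) f) (hfpos : ∀ t, 0 < f t) (k i j : Fin (m+3)) (t : ℝ) :
    deriv (Γf m f k i j) t = dΓ m f k i j t := by
  have hf' : ContDiff ℝ ((⊤:ℕ∞) : WithTop ℕ∞) f := hf.of_le (by simp)
  have hd2 : Differentiable ℝ (deriv f) :=
    (contDiff_infty_iff_deriv.mp hf').2.differentiable (by simp)
  have hd1 : Differentiable ℝ f := hf.differentiable (by simp)
  have hne : (2 : ℝ) * f t ≠ 0 := by have := hfpos t; positivity
  have hg2 : deriv (fun t => deriv f t / (2 * f t)) t = D f t := by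
    rw [deriv_fun_div (hd2 t) ((hd1 t).const_mul (2:ℝ)) hne]
    rw [deriv_const_mul 2 (hd1 t)]
    rfl
  unfold Γf dΓ
  split_ifs
  · simp [deriv_div_const, deriv.neg]
  · exact hg2
  · exact hg2
  · simp

lemma pd_ΓE (hf : ContDiff ℝ (⊤ : ℕ∞) f) (hfpos : ∀ t, 0 < f t) (x : Fin (m+3) → ℝ)
    (a k i j : Fin (m+3)) :
    pd a (fun y => ΓE m f y k i j) x
      = if a = lastIdx m then dΓ m f k i j (x (lastIdx m)) else 0 := by
  rw [ΓE_eq_comp, pd_comp, deriv_Γf m f hf hfpos]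


lemma ΓE_upper_last (x : Fin (m+3) → ℝ) (j k : Fin (m+3)) :
    ΓE m f x (lastIdx m) j k = 0 := by
  unfold ΓE
  split_ifs with h1 h2 h3 <;>
    first
      | rfl
      | (exfalso;
         simp only [Fin.ext_iff, penIdx_val, lastIdx_val, not_and, not_lt, not_true,
             eq_self_iff_true, and_true, true_and, true_implies, imp_false] at *; omega)

lemma sum_ΓΓ (x : Fin (m+3) → ℝ) (i j k l : Fin (m+3)) :
    (∑ s, ΓE m f x l i s * ΓE m f x s j k)
      = (if (i : ℕ) < m + 1 ∧ l = penIdx m then A m f x * ΓE m f x i j k else 0)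
        + (if i = lastIdx m ∧ (l : ℕ) < m + 1 then B m f x * ΓE m f x l j k else 0) := by
  by_cases h1 : (i : ℕ) < m + 1 ∧ l = penIdx m
  · have hs : ∀ s, ΓE m f x l i s = if s = i then A m f x else 0 := by
      intro s
      unfold ΓE A
      split_ifs with c1 c2 c3 c4 <;>
        first
          | rfl
          | (exfalso;
             simp only [Fin.ext_iff, penIdx_val, lastIdx_val, not_and, not_lt, not_true,
             eq_self_iff_true, and_true, true_and, true_implies, imp_false] at *; omega)
    simp only [hs, ite_mul, zero_mul]
    rw [Finset.sum_ite_eq' Finset.univ i (fun s => A m f x * ΓE m f x s j k)]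
    have h2 : ¬ (i = lastIdx m ∧ (l : ℕ) < m + 1) := by
      simp only [Fin.ext_iff, penIdx_val, lastIdx_val] at *; omega
    simp [h1, h2]
  · by_cases h2 : (i : ℕ) < m + 1 ∧ l = i
    · have hs : ∀ s, ΓE m f x l i s = if s = lastIdx m then B m f x else 0 := by
        intro s
        unfold ΓE B
        split_ifs with c1 c2 c3 c4 <;>
          first
            | rfl
            | (exfalso;
               simp only [Fin.ext_iff, penIdx_val, lastIdx_val, not_and, not_lt, not_true,
             eq_self_iff_true, and_true, true_and, true_implies, imp_false] at *; omega)
      simp only [hs, ite_mul, zero_mul]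
      rw [Finset.sum_ite_eq' Finset.univ (lastIdx m) (fun s => B m f x * ΓE m f x s j k)]
      have h3 : ¬ (i = lastIdx m ∧ (l : ℕ) < m + 1) := by
        simp only [Fin.ext_iff, penIdx_val, lastIdx_val] at *; omega
      rw [if_neg h1, if_neg h3]; simp [ΓE_upper_last]
    · by_cases h3 : i = lastIdx m ∧ (l : ℕ) < m + 1
      · have hs : ∀ s, ΓE m f x l i s = if s = l then B m f x else 0 := by
          intro s
          unfold ΓE B
          split_ifs with c1 c2 c3 c4 <;>
            first
              | rfl
              | (exfalso;
                 simp only [Fin.ext_iff, penIdx_val, lastIdx_val, not_and, not_lt, not_true,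
             eq_self_iff_true, and_true, true_and, true_implies, imp_false] at *; omega)
        simp only [hs, ite_mul, zero_mul]
        rw [Finset.sum_ite_eq' Finset.univ l (fun s => B m f x * ΓE m f x s j k)]
        simp [h1, h3]
      · have hs : ∀ s, ΓE m f x l i s = 0 := by
          intro s
          unfold ΓE
          split_ifs with c1 c2 c3 <;>
            first
              | rfl
              | (exfalso;
                 simp only [Fin.ext_iff, penIdx_val, lastIdx_val, not_and, not_lt, not_true,
             eq_self_iff_true, and_true, true_and, true_implies, imp_false] at *; omega)
        rw [if_neg h1, if_neg h3]; simp [hs]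


def VE (t : ℝ) : ℝ := ((deriv f t) ^ 2 - 2 * f t * deriv (deriv f) t) / (4 * f t)
def WE (t : ℝ) : ℝ := (2 * f t * deriv (deriv f) t - (deriv f t) ^ 2) / (4 * (f t) ^ 2)

set_option maxHeartbeats 3200000 in
lemma RopE_closed (hf : ContDiff ℝ (⊤ : ℕ∞) f) (hfpos : ∀ t, 0 < f t) (x : Fin (m+3) → ℝ)
    (i j k l : Fin (m+3)) :
    RopE m f x i j k l =
      if (i : ℕ) < m + 1 ∧ j = lastIdx m ∧ k = i ∧ l = penIdx m then VE f (x (lastIdx m))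
      else if (j : ℕ) < m + 1 ∧ i = lastIdx m ∧ k = j ∧ l = penIdx m then
        -(VE f (x (lastIdx m)))
      else if (i : ℕ) < m + 1 ∧ j = lastIdx m ∧ k = lastIdx m ∧ l = i then
        WE f (x (lastIdx m))
      else if (j : ℕ) < m + 1 ∧ i = lastIdx m ∧ k = lastIdx m ∧ l = j then
        -(WE f (x (lastIdx m)))
      else 0 := by
  have hne : f (x (lastIdx m)) ≠ 0 := ne_of_gt (hfpos _)
  unfold RopE
  rw [pd_ΓE m f hf hfpos, pd_ΓE m f hf hfpos, Finset.sum_sub_distrib, sum_ΓΓ, sum_ΓΓ]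
  rcases idx3 m i with hi | hi | hi <;> rcases idx3 m j with hj | hj | hj <;>
    rcases idx3 m k with hk | hk | hk <;> rcases idx3 m l with hl | hl | hl <;>
    simp only [hi, hj, hk, hl, ΓE, dΓ, A, B, D, VE, WE, ne_last_of_lt, last_ne_of_lt,
      ne_pen_of_lt, pen_ne_of_lt, pen_ne_last, last_ne_pen, pen_not_lt, last_not_lt,
      penIdx_val, lastIdx_val, lt_self_iff_false,
      true_and, and_true, false_and, and_false, if_true, if_false, ite_true, ite_false,
      eq_self_iff_true, not_true, not_false_iff, mul_zero, zero_mul, mul_ite, ite_mul,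
      add_zero, zero_add, sub_zero, zero_sub, neg_zero, neg_neg] <;>
    first
      | rfl
      | ring1
      | (field_simp; ring1)
      | (split_ifs <;>
          first
            | rfl
            | ring1
            | (field_simp; ring1)
            | (exfalso;
               simp only [Fin.ext_iff, penIdx_val, lastIdx_val, not_and, not_lt, not_true,
             eq_self_iff_true, and_true, true_and, true_implies, imp_false] at *; omega))

set_option maxHeartbeats 1600000 in
lemma R4E_closed (hf : ContDiff ℝ (⊤ : ℕ∞) f) (hfpos : ∀ t, 0 < f t) (x : Fin (m+3) → ℝ)
    (i j k h : Fin (m+3)) :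
    R4E m f x i j k h =
      if (i : ℕ) < m + 1 ∧ j = lastIdx m ∧ k = i ∧ h = lastIdx m then VE f (x (lastIdx m))
      else if (j : ℕ) < m + 1 ∧ i = lastIdx m ∧ k = j ∧ h = lastIdx m then
        -(VE f (x (lastIdx m)))
      else if (i : ℕ) < m + 1 ∧ j = lastIdx m ∧ k = lastIdx m ∧ h = i then
        -(VE f (x (lastIdx m)))
      else if (j : ℕ) < m + 1 ∧ i = lastIdx m ∧ k = lastIdx m ∧ h = j then
        VE f (x (lastIdx m))
      else 0 := by
  have hne : f (x (lastIdx m)) ≠ 0 := ne_of_gt (hfpos _)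
  unfold R4E
  rcases idx3 m h with hh | hh | hh
  · have hg : ∀ l, gE m f x l h = if l = h then f (x (lastIdx m)) else 0 := by
      intro l
      unfold gE
      split_ifs with c1 c2 <;>
        first
          | rfl
          | (exfalso;
             simp only [Fin.ext_iff, penIdx_val, lastIdx_val, not_and, not_lt, not_or, not_true,
             eq_self_iff_true, and_true, true_and, true_implies, imp_false] at *;
             omega)
    simp only [hg, mul_ite, mul_zero]
    rw [Finset.sum_ite_eq' Finset.univ h (fun l => RopE m f x i j k l * f (x (lastIdx m)))]
    simp only [Finset.mem_univ, if_true]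
    rw [RopE_closed m f hf hfpos]
    clear hg
    simp only [ne_pen_of_lt hh, ne_last_of_lt hh, and_false, if_false, ite_mul, zero_mul]
    unfold VE WE
    split_ifs <;>
      first
        | rfl
        | ring1
        | (field_simp; ring1)
        | (exfalso;
           simp only [Fin.ext_iff, penIdx_val, lastIdx_val, not_and, not_lt, not_true,
             eq_self_iff_true, and_true, true_and, true_implies, imp_false] at *; omega)
  · have hg : ∀ l, gE m f x l h = if l = lastIdx m then 1 else 0 := by
      intro l
      unfold gE
      split_ifs with c1 c2 <;>
        first
          | rfl
          | (exfalso;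
             simp only [Fin.ext_iff, penIdx_val, lastIdx_val, not_and, not_lt, not_or, not_true,
             eq_self_iff_true, and_true, true_and, true_implies, imp_false] at *;
             omega)
    simp only [hg, mul_ite, mul_zero, mul_one]
    rw [Finset.sum_ite_eq' Finset.univ (lastIdx m) (fun l => RopE m f x i j k l)]
    simp only [Finset.mem_univ, if_true]
    rw [RopE_closed m f hf hfpos]
    clear hg
    subst hh
    split_ifs <;>
      first
        | rfl
        | ring1
        | (exfalso;
           simp only [Fin.ext_iff, penIdx_val, lastIdx_val, not_and, not_lt, not_true,
             eq_self_iff_true, and_true, true_and, true_implies, imp_false] at *; omega)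
  · have hg : ∀ l, gE m f x l h = if l = penIdx m then 1 else 0 := by
      intro l
      unfold gE
      split_ifs with c1 c2 <;>
        first
          | rfl
          | (exfalso;
             simp only [Fin.ext_iff, penIdx_val, lastIdx_val, not_and, not_lt, not_or, not_true,
             eq_self_iff_true, and_true, true_and, true_implies, imp_false] at *;
             omega)
    simp only [hg, mul_ite, mul_zero, mul_one]
    rw [Finset.sum_ite_eq' Finset.univ (penIdx m) (fun l => RopE m f x i j k l)]
    simp only [Finset.mem_univ, if_true]
    rw [RopE_closed m f hf hfpos]
    clear hg
    subst hh
    split_ifs <;>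
      first
        | rfl
        | ring1
        | (exfalso;
           simp only [Fin.ext_iff, penIdx_val, lastIdx_val, not_and, not_lt, not_true,
             eq_self_iff_true, and_true, true_and, true_implies, imp_false] at *; omega)

end Egorov

/-- the only nonvanishing components of the (0,4)-curvature tensor of `g_f`
are `R_{inin} = ((f')² - 2ff'')/(4f)` for `i = 1,…,n-2`, up to curvature symmetries. -/
theorem egorov_curvature (m : ℕ) (f : ℝ → ℝ) (hf : ContDiff ℝ (⊤ : ℕ∞) f) (hfpos : ∀ t, 0 < f t) :
    ∀ x : Fin (m + 3) → ℝ,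
      (∀ i : Fin (m + 3), (i : ℕ) < m + 1 →
        R4E m f x i (lastIdx m) i (lastIdx m) =
          ((deriv f (x (lastIdx m))) ^ 2
            - 2 * f (x (lastIdx m)) * deriv (deriv f) (x (lastIdx m))) /
          (4 * f (x (lastIdx m)))) ∧
      (∀ i j k h : Fin (m + 3),
        ¬ (((i : ℕ) < m + 1 ∧ k = i ∧ j = lastIdx m ∧ h = lastIdx m) ∨
           ((j : ℕ) < m + 1 ∧ h = j ∧ i = lastIdx m ∧ k = lastIdx m) ∨
           ((i : ℕ) < m + 1 ∧ h = i ∧ j = lastIdx m ∧ k = lastIdx m) ∨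
           ((j : ℕ) < m + 1 ∧ k = j ∧ i = lastIdx m ∧ h = lastIdx m)) →
        R4E m f x i j k h = 0) := by
  intro x
  constructor
  · intro i hi
    rw [Egorov.R4E_closed m f hf hfpos, if_pos ⟨hi, rfl, rfl, rfl⟩]
    rfl
  · intro i j k h hcond
    rw [Egorov.R4E_closed m f hf hfpos]
    split_ifs with h1 h2 h3 h4
    · exact absurd (Or.inl ⟨h1.1, h1.2.2.1, h1.2.1, h1.2.2.2⟩) hcond
    · exact absurd (Or.inr (Or.inr (Or.inr ⟨h2.1, h2.2.2.1, h2.2.1, h2.2.2.2⟩))) hcond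
    · exact absurd (Or.inr (Or.inr (Or.inl ⟨h3.1, h3.2.2.2, h3.2.1, h3.2.2.1⟩))) hcond
    · exact absurd (Or.inr (Or.inl ⟨h4.1, h4.2.2.2, h4.2.1, h4.2.2.1⟩)) hcond
    · rfl
end
end

section
/- For the Egorov metric g_f on ℝⁿ, the Ricci tensor in the coordinate frame satisfies Ric_{nn} = ((n-2)/(4f²))((f')² - 2ff'') and all other components vanish. -/
noncomputable section

namespace EgorovRicciAux

@[simp] lemma penIdx_val (m : ℕ) : ((penIdx m : Fin (m + 3)) : ℕ) = m + 1 := rfl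
@[simp] lemma lastIdx_val (m : ℕ) : ((lastIdx m : Fin (m + 3)) : ℕ) = m + 2 := rfl

lemma pd_comp {N : ℕ} (G : ℝ → ℝ) (a b : Fin N) (x : Fin N → ℝ) :
    pd a (fun y => G (y b)) x = if a = b then deriv G (x b) else 0 := by
  unfold pd
  rcases eq_or_ne a b with h | h
  · subst h; simp
  · rw [if_neg h]
    simp [Function.update_of_ne (Ne.symm h)]

/-- The Christoffel symbol as a function of the last coordinate. -/
def Γfun (m : ℕ) (f : ℝ → ℝ) (k i j : Fin (m + 3)) : ℝ → ℝ := fun t =>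
  if (i : ℕ) < m + 1 ∧ j = i ∧ k = penIdx m then -(deriv f t / 2)
  else if (i : ℕ) < m + 1 ∧ j = lastIdx m ∧ k = i then deriv f t / (2 * f t)
  else if (j : ℕ) < m + 1 ∧ i = lastIdx m ∧ k = j then deriv f t / (2 * f t)
  else 0

lemma ΓE_eq_Γfun (m : ℕ) (f : ℝ → ℝ) (y : Fin (m + 3) → ℝ) (k i j : Fin (m + 3)) :
    ΓE m f y k i j = Γfun m f k i j (y (lastIdx m)) := rfl

lemma pd_ΓE (m : ℕ) (f : ℝ → ℝ) (a k i j : Fin (m + 3)) (x : Fin (m + 3) → ℝ) :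
    pd a (fun y => ΓE m f y k i j) x =
      if a = lastIdx m then deriv (Γfun m f k i j) (x (lastIdx m)) else 0 :=
  pd_comp (Γfun m f k i j) a (lastIdx m) x

/-- Derivative of `f'/(2f)`. -/
def dA (f : ℝ → ℝ) (t : ℝ) : ℝ :=
  (deriv (deriv f) t * f t - (deriv f t) ^ 2) / (2 * (f t) ^ 2)

lemma deriv_Γfun (m : ℕ) (f : ℝ → ℝ) (hf : ContDiff ℝ (⊤ : ℕ∞) f) (hfpos : ∀ t, 0 < f t)
    (k i j : Fin (m + 3)) (t : ℝ) :
    deriv (Γfun m f k i j) t =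
      if (i : ℕ) < m + 1 ∧ j = i ∧ k = penIdx m then -(deriv (deriv f) t / 2)
      else if (i : ℕ) < m + 1 ∧ j = lastIdx m ∧ k = i then dA f t
      else if (j : ℕ) < m + 1 ∧ i = lastIdx m ∧ k = j then dA f t
      else 0 := by
  have hdf : Differentiable ℝ f := hf.differentiable (by simp)
  have hf' : ContDiff ℝ (⊤ : ℕ∞) f := hf.of_le (by simp)
  have hdf' : Differentiable ℝ (deriv f) :=
    (contDiff_infty_iff_deriv.mp hf').2.differentiable (by simp)
  have hne : (2 : ℝ) * f t ≠ 0 := ne_of_gt (mul_pos two_pos (hfpos t))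
  have hderivA : deriv (fun s => deriv f s / (2 * f s)) t = dA f t := by
    rw [deriv_fun_div (hdf'.differentiableAt)
      (hdf.differentiableAt.const_mul (2:ℝ)) hne]
    rw [deriv_const_mul 2 hdf.differentiableAt]
    have h0 : f t ≠ 0 := (hfpos t).ne'
    unfold dA
    field_simp
  by_cases h1 : (i : ℕ) < m + 1 ∧ j = i ∧ k = penIdx m
  · have e : Γfun m f k i j = fun s => -(deriv f s / 2) := by
      funext s; unfold Γfun; rw [if_pos h1]
    rw [e, if_pos h1, deriv.fun_neg, deriv_div_const]
  · by_cases h2 : (i : ℕ) < m + 1 ∧ j = lastIdx m ∧ k = i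
    · have e : Γfun m f k i j = fun s => deriv f s / (2 * f s) := by
        funext s; unfold Γfun; rw [if_neg h1, if_pos h2]
      rw [e, if_neg h1, if_pos h2, hderivA]
    · by_cases h3 : (j : ℕ) < m + 1 ∧ i = lastIdx m ∧ k = j
      · have e : Γfun m f k i j = fun s => deriv f s / (2 * f s) := by
          funext s; unfold Γfun; rw [if_neg h1, if_neg h2, if_pos h3]
        rw [e, if_neg h1, if_neg h2, if_pos h3, hderivA]
      · have e : Γfun m f k i j = fun _ => 0 := by
          funext s; unfold Γfun; rw [if_neg h1, if_neg h2, if_neg h3]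
        rw [e, if_neg h1, if_neg h2, if_neg h3, deriv_const]

lemma mul_term1 (m : ℕ) (f : ℝ → ℝ) (x : Fin (m + 3) → ℝ) (k i j s : Fin (m + 3)) :
    ΓE m f x k i s * ΓE m f x s k j =
      if s = k ∧ i = lastIdx m ∧ j = lastIdx m ∧ (k : ℕ) < m + 1 then
        (deriv f (x (lastIdx m)) / (2 * f (x (lastIdx m)))) ^ 2
      else 0 := by
  simp only [ΓE]
  split_ifs <;>
    first
      | ring1
      | (exfalso; simp only [Fin.ext_iff, penIdx_val, lastIdx_val, and_true, true_and] at *; omega)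

lemma mul_term2 (m : ℕ) (f : ℝ → ℝ) (x : Fin (m + 3) → ℝ) (k i j s : Fin (m + 3)) :
    ΓE m f x k k s * ΓE m f x s i j = 0 := by
  simp only [ΓE]
  split_ifs <;>
    first
      | ring1
      | (exfalso; simp only [Fin.ext_iff, penIdx_val, lastIdx_val, and_true, true_and] at *; omega)

lemma sum_sp (m : ℕ) (c : ℝ) :
    (∑ k : Fin (m + 3), if (k : ℕ) < m + 1 then c else 0) = (m + 1 : ℕ) * c := by
  rw [Fin.sum_univ_eq_sum_range (fun n => if n < m + 1 then c else 0) (m + 3)]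
  rw [Finset.sum_range_succ, Finset.sum_range_succ]
  rw [if_neg (by omega), if_neg (by omega)]
  rw [Finset.sum_congr rfl (fun n hn => if_pos (Finset.mem_range.mp hn))]
  simp [Finset.sum_const]

lemma Rop_diag (m : ℕ) (f : ℝ → ℝ) (hf : ContDiff ℝ (⊤ : ℕ∞) f) (hfpos : ∀ t, 0 < f t)
    (x : Fin (m + 3) → ℝ) (i j k : Fin (m + 3)) :
    RopE m f x i k j k =
      if i = lastIdx m ∧ j = lastIdx m ∧ (k : ℕ) < m + 1 then
        -(dA f (x (lastIdx m)) +
          (deriv f (x (lastIdx m)) / (2 * f (x (lastIdx m)))) ^ 2)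
      else 0 := by
  unfold RopE
  rw [pd_ΓE, pd_ΓE]
  have hsum : (∑ s, (ΓE m f x k i s * ΓE m f x s k j - ΓE m f x k k s * ΓE m f x s i j))
      = if i = lastIdx m ∧ j = lastIdx m ∧ (k : ℕ) < m + 1 then
          (deriv f (x (lastIdx m)) / (2 * f (x (lastIdx m)))) ^ 2
        else 0 := by
    simp only [mul_term1, mul_term2, sub_zero]
    simp only [ite_and]
    rw [Finset.sum_ite_eq' Finset.univ k]
    simp
  rw [hsum, deriv_Γfun m f hf hfpos, deriv_Γfun m f hf hfpos]
  split_ifs <;>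
    first
      | ring1
      | (exfalso; simp only [Fin.ext_iff, penIdx_val, lastIdx_val, and_true, true_and] at *; omega)

end EgorovRicciAux

open EgorovRicciAux in
/-- the Ricci tensor of `g_f` satisfies `Ric_{nn} = ((n-2)/(4f²))((f')² - 2ff'')`
and all other components vanish. -/
theorem egorov_ricci (m : ℕ) (f : ℝ → ℝ) (hf : ContDiff ℝ (⊤ : ℕ∞) f) (hfpos : ∀ t, 0 < f t) :
    ∀ (x : Fin (m + 3) → ℝ) (i j : Fin (m + 3)),
      RicE m f x i j =
        if i = lastIdx m ∧ j = lastIdx m then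
          ((m : ℝ) + 1) *
            (((deriv f (x (lastIdx m))) ^ 2
              - 2 * f (x (lastIdx m)) * deriv (deriv f) (x (lastIdx m))) /
            (4 * (f (x (lastIdx m))) ^ 2))
        else 0 := by
  intro x i j
  unfold RicE
  simp only [Rop_diag m f hf hfpos x i j]
  by_cases hij : i = lastIdx m ∧ j = lastIdx m
  · simp only [hij, true_and, if_pos]
    rw [sum_sp]
    have h0 : f (x (lastIdx m)) ≠ 0 := (hfpos _).ne'
    unfold dA
    push_cast
    field_simp
    ring
  · rw [if_neg hij]
    have : ∀ k : Fin (m + 3),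
        (if i = lastIdx m ∧ j = lastIdx m ∧ (k : ℕ) < m + 1 then
          -(dA f (x (lastIdx m)) +
            (deriv f (x (lastIdx m)) / (2 * f (x (lastIdx m)))) ^ 2)
        else 0) = 0 := by
      intro k
      rw [if_neg]
      rintro ⟨h1, h2, -⟩
      exact hij ⟨h1, h2⟩
    simp only [this, Finset.sum_const_zero]
end
end

section
/- For an Egorov space, the skew-symmetric curvature operator R(π) of any nondegenerate oriented 2-plane π is three-step nilpotent: R(π)³ = 0. Consequently all its eigenvalues vanish and Egorov spaces are Ivanov–Petrova manifolds. -/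
noncomputable section

/-- The non-degeneracy pattern for nonzero curvature operator entries. -/
def Pat (m : ℕ) (k l : Fin (m + 3)) : Prop :=
  (k = lastIdx m ∧ (l : ℕ) < m + 1) ∨ (l = penIdx m ∧ (k : ℕ) < m + 1)

lemma gammaE_update (m : ℕ) (f : ℝ → ℝ) (x : Fin (m + 3) → ℝ) (a : Fin (m + 3))
    (ha : a ≠ lastIdx m) (t : ℝ) (K I J : Fin (m + 3)) :
    ΓE m f (Function.update x a t) K I J = ΓE m f x K I J := by
  unfold ΓE
  rw [Function.update_of_ne (Ne.symm ha)]

lemma pd_gammaE_ne_last (m : ℕ) (f : ℝ → ℝ) (x : Fin (m + 3) → ℝ) (a : Fin (m + 3))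
    (ha : a ≠ lastIdx m) (K I J : Fin (m + 3)) :
    pd a (fun y => ΓE m f y K I J) x = 0 := by
  unfold pd
  have h : (fun t => ΓE m f (Function.update x a t) K I J)
      = fun _ => ΓE m f x K I J := by
    funext t; exact gammaE_update m f x a ha t K I J
  rw [h, deriv_const]

lemma prodGamma_zero (m : ℕ) (f : ℝ → ℝ) (x : Fin (m + 3) → ℝ)
    (i j k l s : Fin (m + 3)) (hp : ¬ Pat m k l) (hij : i ≠ j) :
    ΓE m f x l i s * ΓE m f x s j k = 0 := by
  unfold Pat at hp
  unfold ΓE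
  split_ifs <;>
    first
      | ring1
      | (exfalso; simp only [Fin.ext_iff, Fin.val_mk, penIdx, lastIdx, not_or, not_and, ne_eq] at *; omega)

lemma pdGamma_zero (m : ℕ) (f : ℝ → ℝ) (x : Fin (m + 3) → ℝ)
    (i j k l : Fin (m + 3)) (hp : ¬ Pat m k l) (hij : i ≠ j) :
    pd i (fun y => ΓE m f y l j k) x = 0 := by
  by_cases hi : i = lastIdx m
  · subst hi
    have h0 : ∀ y : Fin (m + 3) → ℝ, ΓE m f y l j k = 0 := by
      intro y
      unfold Pat at hp
      unfold ΓE
      split_ifs <;>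
        first
          | rfl
          | (exfalso; simp only [Fin.ext_iff, Fin.val_mk, penIdx, lastIdx, not_or, not_and, ne_eq] at *; omega)
    unfold pd
    have h : (fun t => ΓE m f (Function.update x (lastIdx m) t) l j k) = fun _ => (0:ℝ) := by
      funext t; exact h0 _
    rw [h, deriv_const]
  · exact pd_gammaE_ne_last m f x i hi l j k

lemma ropE_zero (m : ℕ) (f : ℝ → ℝ) (x : Fin (m + 3) → ℝ)
    (i j k l : Fin (m + 3)) (hp : ¬ Pat m k l) : RopE m f x i j k l = 0 := by
  by_cases hij : i = j
  · subst hij; simp [RopE]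
  · unfold RopE
    rw [pdGamma_zero m f x i j k l hp hij, pdGamma_zero m f x j i k l hp (Ne.symm hij)]
    rw [Finset.sum_eq_zero (fun s _ => by
      rw [prodGamma_zero m f x i j k l s hp hij,
        prodGamma_zero m f x j i k l s hp (Ne.symm hij), sub_zero])]
    ring

lemma rmatE_zero (m : ℕ) (f : ℝ → ℝ) (x u v : Fin (m + 3) → ℝ)
    (k l : Fin (m + 3)) (hp : ¬ Pat m k l) : RMatE m f x u v l k = 0 := by
  unfold RMatE
  simp only [Matrix.of_apply]
  refine Finset.sum_eq_zero fun i _ => Finset.sum_eq_zero fun j _ => ?_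
  rw [ropE_zero m f x i j k l hp, mul_zero]

lemma rmatE_cube (m : ℕ) (f : ℝ → ℝ) (x u v : Fin (m + 3) → ℝ) :
    RMatE m f x u v ^ 3 = 0 := by
  set A := RMatE m f x u v with hA
  have key : ∀ l k, ¬ Pat m k l → A l k = 0 := fun l k hp => rmatE_zero m f x u v k l hp
  have h3 : A ^ 3 = A * A * A := by rw [pow_succ, pow_succ, pow_one]
  rw [h3]
  ext p q
  simp only [Matrix.mul_apply, Matrix.zero_apply, Finset.sum_mul]
  refine Finset.sum_eq_zero fun r _ => Finset.sum_eq_zero fun t _ => ?_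
  by_cases h1 : Pat m t p
  · by_cases h2 : Pat m r t
    · by_cases h4 : Pat m q r
      · exfalso
        unfold Pat at h1 h2 h4
        simp only [Fin.ext_iff, Fin.val_mk, penIdx, lastIdx] at h1 h2 h4
        omega
      · rw [key r q h4, mul_zero]
    · rw [key t r h2, mul_zero, zero_mul]
  · rw [key p t h1, zero_mul, zero_mul]

/-- for any nondegenerate oriented 2-plane `π = span{u,v}`, the
skew-symmetric curvature operator `R(π) = Ξ⁻¹ R(u,v)` of an Egorov space is three-step
nilpotent, `R(π)³ = 0`; hence all its eigenvalues vanish (they are constant over all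
nondegenerate 2-planes), i.e. Egorov spaces are Ivanov–Petrova. -/
theorem egorov_IP (m : ℕ) (f : ℝ → ℝ) (hf : ContDiff ℝ (⊤ : ℕ∞) f) (hfpos : ∀ t, 0 < f t) :
    ∀ (x : Fin (m + 3) → ℝ) (u v : Fin (m + 3) → ℝ),
      gdotE m f x u u * gdotE m f x v v - (gdotE m f x u v) ^ 2 ≠ 0 →
      ((Real.sqrt |gdotE m f x u u * gdotE m f x v v - (gdotE m f x u v) ^ 2|)⁻¹ •
          RMatE m f x u v) ^ 3 = 0 ∧
      (∀ (μ : ℝ) (w : Fin (m + 3) → ℝ), w ≠ 0 →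
        ((Real.sqrt |gdotE m f x u u * gdotE m f x v v - (gdotE m f x u v) ^ 2|)⁻¹ •
          RMatE m f x u v).mulVec w = μ • w → μ = 0) := by
  intro x u v _hnd
  have hcube :
      ((Real.sqrt |gdotE m f x u u * gdotE m f x v v - gdotE m f x u v ^ 2|)⁻¹ •
        RMatE m f x u v) ^ 3 = 0 := by
    rw [smul_pow, rmatE_cube, smul_zero]
  refine ⟨hcube, ?_⟩
  intro μ w hw hmw
  set B := (Real.sqrt |gdotE m f x u u * gdotE m f x v v - gdotE m f x u v ^ 2|)⁻¹ •
    RMatE m f x u v with hB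
  have hexp : B ^ 3 = B * (B * B) := by
    rw [pow_succ, pow_succ, pow_one, mul_assoc]
  have h1 : (B * (B * B)).mulVec w = (μ ^ 3) • w := by
    simp only [← Matrix.mulVec_mulVec, hmw, Matrix.mulVec_smul, smul_smul]
    ring_nf
  rw [← hexp, hcube, Matrix.zero_mulVec] at h1
  rcases smul_eq_zero.mp h1.symm with h | h
  · exact pow_eq_zero_iff (by norm_num) |>.mp h
  · exact absurd h hw
end
end

section
/- Every Egorov space is curvature-Ricci commuting: R(u,v)·Q = Q·R(u,v) for all tangent vectors u, v, where Q is the Ricci operator. Concretely, the matrix of R(u,v) in coordinates (as given by the curvature components of g_f) commutes with the matrix of Q, whose only nonzero entry is at position (n-1, n). -/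
noncomputable section

lemma GammaE_j_pen (m : ℕ) (f : ℝ → ℝ) (x : Fin (m + 3) → ℝ) (k i : Fin (m + 3)) :
    ΓE m f x k i (penIdx m) = 0 := by
  unfold ΓE penIdx lastIdx
  split_ifs with h1 h2 h3 <;>
    first
    | rfl
    | (exfalso; simp only [Fin.ext_iff] at *; omega)

lemma GammaE_k_last (m : ℕ) (f : ℝ → ℝ) (x : Fin (m + 3) → ℝ) (i j : Fin (m + 3)) :
    ΓE m f x (lastIdx m) i j = 0 := by
  unfold ΓE penIdx lastIdx
  split_ifs with h1 h2 h3 <;>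
    first
    | rfl
    | (exfalso; simp only [Fin.ext_iff] at *; omega)

lemma RopE_k_pen (m : ℕ) (f : ℝ → ℝ) (x : Fin (m + 3) → ℝ) (i j l : Fin (m + 3)) :
    RopE m f x i j (penIdx m) l = 0 := by
  simp [RopE, pd, GammaE_j_pen]

lemma RopE_l_last (m : ℕ) (f : ℝ → ℝ) (x : Fin (m + 3) → ℝ) (i j k : Fin (m + 3)) :
    RopE m f x i j k (lastIdx m) = 0 := by
  simp [RopE, pd, GammaE_k_last]

/-- every Egorov space is curvature-Ricci commuting:
`R(u,v)·Q = Q·R(u,v)` for all tangent vectors `u, v`, where `Q` is the Ricci operator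
(whose only nonzero entry in coordinates is at position `(n-1,n)`). -/
theorem egorov_curvature_ricci_commuting (m : ℕ) (f : ℝ → ℝ) (hf : ContDiff ℝ (⊤ : ℕ∞) f)
    (hfpos : ∀ t, 0 < f t) :
    ∀ (x : Fin (m + 3) → ℝ) (u v : Fin (m + 3) → ℝ),
      RMatE m f x u v * QMatE m f x = QMatE m f x * RMatE m f x u v := by
  intro x u v
  ext l k
  rw [Matrix.mul_apply, Matrix.mul_apply]
  have hL : ∀ s : Fin (m + 3),
      RMatE m f x u v l s * QMatE m f x s k = 0 := by
    intro s
    simp only [QMatE, RMatE, Matrix.of_apply, mul_ite, mul_zero]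
    split_ifs with h
    · obtain ⟨hs, hk⟩ := h
      subst hs
      simp [RopE_k_pen]
    · rfl
  have hR : ∀ s : Fin (m + 3),
      QMatE m f x l s * RMatE m f x u v s k = 0 := by
    intro s
    simp only [QMatE, RMatE, Matrix.of_apply, ite_mul, zero_mul]
    split_ifs with h
    · obtain ⟨hl, hs⟩ := h
      subst hs
      simp [RopE_l_last]
    · rfl
  simp [hL, hR]
end
end

section
/- Every Egorov space is curvature-curvature commuting: R(u,v)·R(z,w) = R(z,w)·R(u,v) for all tangent vectors u, v, z, w. Concretely, any two matrices of the form c·A(a,b), where A(a,b) has (i,n) entry a_i and (n-1,j) entry b_j (i,j ≤ n-2) and zeros elsewhere with b = -f·a, commute. -/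
noncomputable section

/-- The auxiliary matrix `c·A(a,b)` with `(i,n)` entry `c·a_i` and `(n-1,j)` entry
`c·b_j = c·(-f·a_j)` for spatial `i, j`, zeros elsewhere. -/
def Amat (m : ℕ) (fv c : ℝ) (a : Fin (m + 3) → ℝ) :
    Matrix (Fin (m + 3)) (Fin (m + 3)) ℝ :=
  Matrix.of fun l k =>
    if (l : ℕ) < m + 1 ∧ k = lastIdx m then c * a l
    else if l = penIdx m ∧ (k : ℕ) < m + 1 then c * (-(fv * a k))
    else 0




@[simp] lemma last_val (m : ℕ) : ((lastIdx m) : ℕ) = m + 2 := rfl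
@[simp] lemma pen_val (m : ℕ) : ((penIdx m) : ℕ) = m + 1 := rfl
@[simp] lemma pen_ne_last (m : ℕ) : penIdx m ≠ lastIdx m := by
  exact Fin.ne_of_val_ne (by simp)
@[simp] lemma last_ne_pen (m : ℕ) : lastIdx m ≠ penIdx m := by
  exact Fin.ne_of_val_ne (by simp)
@[simp] lemma not_m2_lt (m : ℕ) : ¬(m + 2 < m + 1) := by omega

lemma fin_cases3 (m : ℕ) (i : Fin (m+3)) : (i:ℕ) < m+1 ∨ i = penIdx m ∨ i = lastIdx m := by
  rcases i with ⟨v, hv⟩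
  simp [penIdx, lastIdx, Fin.ext_iff]; omega

lemma pd_apply_last (m : ℕ) (F : ℝ → ℝ) (x : Fin (m+3) → ℝ) :
    pd (lastIdx m) (fun y => F (y (lastIdx m))) x = deriv F (x (lastIdx m)) := by
  simp [pd, Function.update_self]

lemma pd_apply_ne (m : ℕ) (a : Fin (m+3)) (ha : a ≠ lastIdx m) (F : ℝ → ℝ) (x : Fin (m+3) → ℝ) :
    pd a (fun y => F (y (lastIdx m))) x = 0 := by
  simp [pd, Function.update_of_ne ha.symm]
def Γt (m : ℕ) (f : ℝ → ℝ) (t : ℝ) (k i j : Fin (m + 3)) : ℝ :=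
  if (i : ℕ) < m + 1 ∧ j = i ∧ k = penIdx m then -(deriv f t / 2)
  else if (i : ℕ) < m + 1 ∧ j = lastIdx m ∧ k = i then deriv f t / (2 * f t)
  else if (j : ℕ) < m + 1 ∧ i = lastIdx m ∧ k = j then deriv f t / (2 * f t)
  else 0

lemma Γt_split_up (m : ℕ) (f : ℝ → ℝ) (t : ℝ) (s j k : Fin (m+3)) : Γt m f t s j k =
    (if ((j:ℕ) < m+1 ∧ k = j) ∧ s = penIdx m then -(deriv f t / 2) else 0)
  + (if ((j:ℕ) < m+1 ∧ k = lastIdx m) ∧ s = j then deriv f t / (2 * f t) else 0)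
  + (if ((k:ℕ) < m+1 ∧ j = lastIdx m) ∧ s = k then deriv f t / (2 * f t) else 0) := by
  unfold Γt
  split_ifs <;> first
    | ring1
    | (exfalso; simp only [Fin.ext_iff, last_val, pen_val] at *; omega)

lemma Γt_split_low (m : ℕ) (f : ℝ → ℝ) (t : ℝ) (l i s : Fin (m+3)) : Γt m f t l i s =
    (if ((i:ℕ) < m+1 ∧ l = penIdx m) ∧ s = i then -(deriv f t / 2) else 0)
  + (if ((i:ℕ) < m+1 ∧ l = i) ∧ s = lastIdx m then deriv f t / (2 * f t) else 0)
  + (if ((l:ℕ) < m+1 ∧ i = lastIdx m) ∧ s = l then deriv f t / (2 * f t) else 0) := by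
  unfold Γt
  split_ifs <;> first
    | ring1
    | (exfalso; simp only [Fin.ext_iff, last_val, pen_val] at *; omega)
lemma sum_ind {N : ℕ} (C D : Prop) [Decidable C] [Decidable D] (a b : Fin N) (v w : ℝ) :
    ∑ s, (if C ∧ s = a then v else 0) * (if D ∧ s = b then w else 0)
      = if (C ∧ D) ∧ a = b then v * w else 0 := by
  have h : ∀ s : Fin N, (if C ∧ s = a then v else 0) * (if D ∧ s = b then w else 0)
      = if s = a ∧ ((C ∧ D) ∧ a = b) then v * w else 0 := by
    intro s
    by_cases hsa : s = a
    · subst hsa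
      by_cases hab : s = b
      · subst hab
        by_cases hC : C <;> by_cases hD : D <;> simp [hC, hD]
      · simp [hab]
    · simp [hsa]
  rw [Finset.sum_congr rfl fun s _ => h s]
  by_cases hP : (C ∧ D) ∧ a = b <;> simp [hP]

lemma sum_pick1 {N : ℕ} (b : Fin N) (Q : Prop) [Decidable Q] (G : Fin N → ℝ) (c : ℝ) :
    (∑ j, G j * (if j = b ∧ Q then c else 0)) = if Q then G b * c else 0 := by
  by_cases hQ : Q <;> simp [hQ, mul_ite, mul_zero]

lemma sum_ΓΓ (m : ℕ) (f : ℝ → ℝ) (t : ℝ) (i j k l : Fin (m+3)) :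
    (∑ s, Γt m f t l i s * Γt m f t s j k) =
    (if ((((i:ℕ) < m+1 ∧ l = penIdx m) ∧ ((j:ℕ) < m+1 ∧ k = lastIdx m)) ∧ i = j)
        then -(deriv f t/2) * (deriv f t/(2*f t)) else 0)
  + (if ((((i:ℕ) < m+1 ∧ l = penIdx m) ∧ ((k:ℕ) < m+1 ∧ j = lastIdx m)) ∧ i = k)
        then -(deriv f t/2) * (deriv f t/(2*f t)) else 0)
  + (if ((((l:ℕ) < m+1 ∧ i = lastIdx m) ∧ ((j:ℕ) < m+1 ∧ k = lastIdx m)) ∧ l = j)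
        then (deriv f t/(2*f t)) * (deriv f t/(2*f t)) else 0)
  + (if ((((l:ℕ) < m+1 ∧ i = lastIdx m) ∧ ((k:ℕ) < m+1 ∧ j = lastIdx m)) ∧ l = k)
        then (deriv f t/(2*f t)) * (deriv f t/(2*f t)) else 0) := by
  have e : ∀ s : Fin (m+3), Γt m f t l i s * Γt m f t s j k =
      ((if ((i:ℕ) < m+1 ∧ l = penIdx m) ∧ s = i then -(deriv f t / 2) else 0)
      + (if ((i:ℕ) < m+1 ∧ l = i) ∧ s = lastIdx m then deriv f t / (2 * f t) else 0)
      + (if ((l:ℕ) < m+1 ∧ i = lastIdx m) ∧ s = l then deriv f t / (2 * f t) else 0)) *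
      ((if ((j:ℕ) < m+1 ∧ k = j) ∧ s = penIdx m then -(deriv f t / 2) else 0)
      + (if ((j:ℕ) < m+1 ∧ k = lastIdx m) ∧ s = j then deriv f t / (2 * f t) else 0)
      + (if ((k:ℕ) < m+1 ∧ j = lastIdx m) ∧ s = k then deriv f t / (2 * f t) else 0)) := by
    intro s; rw [← Γt_split_low, ← Γt_split_up]
  rw [Finset.sum_congr rfl fun s _ => e s]
  simp only [add_mul, mul_add, Finset.sum_add_distrib, sum_ind]
  have z1 : ¬((((i:ℕ) < m+1 ∧ l = penIdx m) ∧ ((j:ℕ) < m+1 ∧ k = j)) ∧ i = penIdx m) := by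
    simp only [Fin.ext_iff, last_val, pen_val]; omega
  have z2 : ¬((((i:ℕ) < m+1 ∧ l = i) ∧ ((j:ℕ) < m+1 ∧ k = j)) ∧ lastIdx m = penIdx m) := by
    simp only [Fin.ext_iff, last_val, pen_val]; omega
  have z3 : ¬((((i:ℕ) < m+1 ∧ l = i) ∧ ((j:ℕ) < m+1 ∧ k = lastIdx m)) ∧ lastIdx m = j) := by
    simp only [Fin.ext_iff, last_val, pen_val]; omega
  have z4 : ¬((((i:ℕ) < m+1 ∧ l = i) ∧ ((k:ℕ) < m+1 ∧ j = lastIdx m)) ∧ lastIdx m = k) := by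
    simp only [Fin.ext_iff, last_val, pen_val]; omega
  have z5 : ¬((((l:ℕ) < m+1 ∧ i = lastIdx m) ∧ ((j:ℕ) < m+1 ∧ k = j)) ∧ l = penIdx m) := by
    simp only [Fin.ext_iff, last_val, pen_val]; omega
  rw [if_neg z1, if_neg z2, if_neg z3, if_neg z4, if_neg z5]
  ring


def dq (f : ℝ → ℝ) (t : ℝ) : ℝ :=
  (deriv (deriv f) t * (2 * f t) - deriv f t * (2 * deriv f t)) / (2 * f t) ^ 2

lemma deriv_Γt (m : ℕ) (f : ℝ → ℝ) (hf : ContDiff ℝ (⊤ : ℕ∞) f) (hfpos : ∀ t, 0 < f t)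
    (l j k : Fin (m+3)) (t : ℝ) :
    deriv (fun t => Γt m f t l j k) t =
      (if ((j:ℕ) < m+1 ∧ k = j) ∧ l = penIdx m then -(deriv (deriv f) t / 2) else 0)
    + (if ((j:ℕ) < m+1 ∧ k = lastIdx m) ∧ l = j then dq f t else 0)
    + (if ((k:ℕ) < m+1 ∧ j = lastIdx m) ∧ l = k then dq f t else 0) := by
  have hd : Differentiable ℝ f := hf.differentiable (by simp)
  have hd2 : Differentiable ℝ (deriv f) :=
    ((contDiff_infty_iff_deriv.mp (hf.of_le (by simp))).2).differentiable (by simp)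
  have hne : ∀ t, 2 * f t ≠ 0 := fun t => by have := hfpos t; positivity
  have key2 : deriv (fun s => deriv f s / (2 * f s)) t = dq f t := by
    rw [deriv_fun_div (hd2 t) ((hd t).const_mul 2) (hne t)]
    rw [deriv_const_mul 2 (hd t)]
    rfl
  by_cases h1 : (j:ℕ) < m + 1 ∧ k = j ∧ l = penIdx m
  · have e : (fun t => Γt m f t l j k) = fun t => -(deriv f t / 2) := by
      funext s; simp [Γt, h1.1, h1.2.1, h1.2.2]
    rw [e]
    have : deriv (fun t => -(deriv f t / 2)) t = -(deriv (deriv f) t / 2) := by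
      rw [deriv.fun_neg, deriv_div_const]
    rw [this, if_pos ⟨⟨h1.1, h1.2.1⟩, h1.2.2⟩, if_neg, if_neg]
    · ring
    · simp only [Fin.ext_iff, last_val, pen_val]; omega
    · simp only [Fin.ext_iff, last_val, pen_val]; omega
  · by_cases h2 : (j:ℕ) < m + 1 ∧ k = lastIdx m ∧ l = j
    · have e : (fun t => Γt m f t l j k) = fun t => deriv f t / (2 * f t) := by
        funext s
        have : ¬((j:ℕ) < m + 1 ∧ k = j ∧ l = penIdx m) := h1
        have hlj : lastIdx m ≠ j := by
          have hv := h2.1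
          exact Fin.ne_of_val_ne (by simp only [last_val]; omega)
        simp [Γt, this, h2.1, h2.2.1, h2.2.2, hlj]
      rw [e, key2, if_neg, if_pos ⟨⟨h2.1, h2.2.1⟩, h2.2.2⟩, if_neg]
      · ring
      · simp only [Fin.ext_iff, last_val, pen_val] at *; omega
      · simp only [Fin.ext_iff, last_val, pen_val] at *; omega
    · by_cases h3 : (k:ℕ) < m + 1 ∧ j = lastIdx m ∧ l = k
      · have e : (fun t => Γt m f t l j k) = fun t => deriv f t / (2 * f t) := by
          funext s; simp [Γt, h1, h2, h3.1, h3.2.1, h3.2.2]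
        rw [e, key2, if_neg, if_neg, if_pos ⟨⟨h3.1, h3.2.1⟩, h3.2.2⟩]
        · ring
        · simp only [Fin.ext_iff, last_val, pen_val] at *; omega
        · simp only [Fin.ext_iff, last_val, pen_val] at *; omega
      · have e : (fun t => Γt m f t l j k) = fun _ => (0:ℝ) := by
          funext s; simp only [Γt, if_neg h1, if_neg h2, if_neg h3]
        rw [e, deriv_const]
        rw [if_neg, if_neg, if_neg]
        · ring
        · exact fun h => h3 ⟨h.1.1, h.1.2, h.2⟩
        · exact fun h => h2 ⟨h.1.1, h.1.2, h.2⟩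
        · exact fun h => h1 ⟨h.1.1, h.1.2, h.2⟩


def Rt (m : ℕ) (f : ℝ → ℝ) (t : ℝ) (i j k l : Fin (m+3)) : ℝ :=
    (if j = lastIdx m ∧ i = k ∧ ((k:ℕ) < m+1 ∧ l = penIdx m) then f t * cE f t else 0)
  + (if j = lastIdx m ∧ i = l ∧ ((l:ℕ) < m+1 ∧ k = lastIdx m) then -(cE f t) else 0)
  + (if j = k ∧ i = lastIdx m ∧ ((k:ℕ) < m+1 ∧ l = penIdx m) then -(f t * cE f t) else 0)
  + (if j = l ∧ i = lastIdx m ∧ ((l:ℕ) < m+1 ∧ k = lastIdx m) then cE f t else 0)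

lemma RopE_eq (m : ℕ) (f : ℝ → ℝ) (hf : ContDiff ℝ (⊤ : ℕ∞) f) (hfpos : ∀ t, 0 < f t)
    (x : Fin (m+3) → ℝ) (i j k l : Fin (m+3)) :
    RopE m f x i j k l = Rt m f (x (lastIdx m)) i j k l := by
  have hg : f (x (lastIdx m)) ≠ 0 := ne_of_gt (hfpos _)
  have hpd : ∀ (a l' j' k' : Fin (m+3)), pd a (fun y => ΓE m f y l' j' k') x
      = if a = lastIdx m then deriv (fun t => Γt m f t l' j' k') (x (lastIdx m)) else 0 := by
    intro a l' j' k'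
    have he : (fun y => ΓE m f y l' j' k') = (fun y => Γt m f (y (lastIdx m)) l' j' k') := rfl
    rw [he]
    by_cases ha : a = lastIdx m
    · subst ha; rw [if_pos rfl]; exact pd_apply_last m (fun t => Γt m f t l' j' k') x
    · rw [if_neg ha]; exact pd_apply_ne m a ha (fun t => Γt m f t l' j' k') x
  unfold RopE
  rw [hpd, hpd, Finset.sum_sub_distrib]
  have hΓ : ∀ (a b c : Fin (m+3)) (y : Fin (m+3) → ℝ),
      ΓE m f y a b c = Γt m f (y (lastIdx m)) a b c := fun _ _ _ _ => rfl
  simp only [hΓ]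
  rw [sum_ΓΓ, sum_ΓΓ]
  simp only [deriv_Γt m f hf hfpos]
  unfold Rt
  rcases fin_cases3 m i with hi | hi | hi <;> rcases fin_cases3 m j with hj | hj | hj
  · -- i spatial, j spatial
    have hil : i ≠ lastIdx m := Fin.ne_of_val_ne (by simp only [last_val]; omega)
    have hjl : j ≠ lastIdx m := Fin.ne_of_val_ne (by simp only [last_val]; omega)
    have hip : i ≠ penIdx m := Fin.ne_of_val_ne (by simp only [pen_val]; omega)
    by_cases hij : i = j
    · subst hij; simp [hi, hil, hjl]
    · have hji : j ≠ i := Ne.symm hij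
      simp [hi, hj, hil, hjl, hij, hji]
  · -- i spatial, j = pen
    subst hj
    have hil : i ≠ lastIdx m := Fin.ne_of_val_ne (by simp only [last_val]; omega)
    simp [hi, hil]
  · -- i spatial, j = last
    subst hj
    have hil : i ≠ lastIdx m := Fin.ne_of_val_ne (by simp only [last_val]; omega)
    have hip : i ≠ penIdx m := Fin.ne_of_val_ne (by simp only [pen_val]; omega)
    have hpi : penIdx m ≠ i := Ne.symm hip
    by_cases hki : k = i
    · subst hki
      by_cases hlp : l = penIdx m
      · subst hlp
        simp [hi, hil, hip, hpi, cE, dq]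
        field_simp
        ring
      · simp [hi, hil, hip, hpi, hlp]
    · have hik : i ≠ k := Ne.symm hki
      by_cases hkl : k = lastIdx m
      · subst hkl
        by_cases hli : l = i
        · subst hli
          simp [hi, hil, hip, hpi, hki, hik, cE, dq]
          field_simp
          ring
        · have hIl : i ≠ l := Ne.symm hli
          simp [hi, hil, hip, hpi, hki, hik, hli, hIl]
      · simp [hi, hil, hip, hpi, hki, hik, hkl]
  · -- i = pen, j spatial
    subst hi
    have hjl : j ≠ lastIdx m := Fin.ne_of_val_ne (by simp only [last_val]; omega)
    simp [hj, hjl]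
  · -- i = pen, j = pen
    subst hi; subst hj
    simp
  · -- i = pen, j = last
    subst hi; subst hj
    by_cases hpk : penIdx m = k
    · subst hpk
      by_cases hpl : penIdx m = l
      · subst hpl; simp
      · simp [hpl]
    · by_cases hpl : penIdx m = l
      · subst hpl
        simp [hpk]
      · simp [hpk, hpl]
  · -- i = last, j spatial
    subst hi
    have hjl : j ≠ lastIdx m := Fin.ne_of_val_ne (by simp only [last_val]; omega)
    have hjp : j ≠ penIdx m := Fin.ne_of_val_ne (by simp only [pen_val]; omega)
    have hpj : penIdx m ≠ j := Ne.symm hjp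
    by_cases hkj : k = j
    · subst hkj
      by_cases hlp : l = penIdx m
      · subst hlp
        simp [hj, hjl, hjp, hpj, cE, dq]
        field_simp
        ring
      · simp [hj, hjl, hjp, hpj, hlp]
    · have hjk : j ≠ k := Ne.symm hkj
      by_cases hkl : k = lastIdx m
      · subst hkl
        by_cases hlj : l = j
        · subst hlj
          simp [hj, hjl, hjp, hpj, hkj, hjk, cE, dq]
          field_simp
          ring
        · have hJl : j ≠ l := Ne.symm hlj
          simp [hj, hjl, hjp, hpj, hkj, hjk, hlj, hJl]
      · simp [hj, hjl, hjp, hpj, hkj, hjk, hkl]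
  · -- i = last, j = pen
    subst hi; subst hj
    by_cases hpk : penIdx m = k
    · subst hpk
      by_cases hpl : penIdx m = l
      · subst hpl; simp
      · simp [hpl]
    · by_cases hpl : penIdx m = l
      · subst hpl
        simp [hpk]
      · simp [hpk, hpl]
  · -- i = last, j = last
    subst hi; subst hj
    have e : ∀ (c : Prop) [Decidable c] (y : ℝ), (if c then -y else 0) = -(if c then y else 0) := by
      intro c _ y; split_ifs <;> simp
    simp only [e]
    simp

lemma dsum {n : ℕ} (a b : Fin n) (Q : Prop) [Decidable Q] (c : ℝ) (u v : Fin n → ℝ) :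
    (∑ i, ∑ j, u i * v j * (if j = b ∧ i = a ∧ Q then c else 0))
      = if Q then u a * v b * c else 0 := by
  by_cases hQ : Q
  · simp only [hQ, and_true]
    have h1 : ∀ i, (∑ j, u i * v j * (if j = b ∧ i = a then c else 0))
        = u i * v b * (if i = a then c else 0) := by
      intro i
      rw [Finset.sum_eq_single b (fun j _ hj => by simp [hj]) (by simp)]
      by_cases hia : i = a <;> simp [hia]
    rw [Finset.sum_congr rfl fun i _ => h1 i,
      Finset.sum_eq_single a (fun i _ hi => by simp [hi]) (by simp)]
    simp
  · simp [hQ]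

lemma Amat_comm_entry (m : ℕ) (fv c c' : ℝ) (a a' : Fin (m+3) → ℝ) (l s k : Fin (m+3)) :
    Amat m fv c a l s * Amat m fv c' a' s k = Amat m fv c' a' l s * Amat m fv c a s k := by
  simp only [Amat, Matrix.of_apply]
  split_ifs <;> first
    | ring1
    | (exfalso; simp only [Fin.ext_iff, last_val, pen_val] at *; omega)

lemma Amat_comm (m : ℕ) (fv c c' : ℝ) (a a' : Fin (m+3) → ℝ) :
    Amat m fv c a * Amat m fv c' a' = Amat m fv c' a' * Amat m fv c a := by
  ext l k
  simp only [Matrix.mul_apply]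
  exact Finset.sum_congr rfl fun s _ => Amat_comm_entry m fv c c' a a' l s k

lemma RMatE_eq (m : ℕ) (f : ℝ → ℝ) (hf : ContDiff ℝ (⊤ : ℕ∞) f) (hfpos : ∀ t, 0 < f t)
    (x : Fin (m+3) → ℝ) (u v : Fin (m+3) → ℝ) :
    RMatE m f x u v = Amat m (f (x (lastIdx m))) (-(cE f (x (lastIdx m))))
      (fun r => u r * v (lastIdx m) - u (lastIdx m) * v r) := by
  ext l k
  simp only [RMatE, Amat, Matrix.of_apply]
  simp only [RopE_eq m f hf hfpos x, Rt]
  simp only [mul_add, Finset.sum_add_distrib, dsum]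
  split_ifs <;> first
    | ring1
    | (exfalso; simp only [Fin.ext_iff, last_val, pen_val] at *; omega)

/-- every Egorov space is curvature-curvature commuting:
`R(u,v)·R(z,w) = R(z,w)·R(u,v)` for all tangent vectors; concretely, any two matrices of
the form `c·A(a, -f·a)` commute. -/
theorem egorov_curvature_curvature_commuting (m : ℕ) (f : ℝ → ℝ) (hf : ContDiff ℝ (⊤ : ℕ∞) f)
    (hfpos : ∀ t, 0 < f t) :
    (∀ (x : Fin (m + 3) → ℝ) (u v z w : Fin (m + 3) → ℝ),
      RMatE m f x u v * RMatE m f x z w = RMatE m f x z w * RMatE m f x u v) ∧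
    (∀ (fv c c' : ℝ) (a a' : Fin (m + 3) → ℝ),
      Amat m fv c a * Amat m fv c' a' = Amat m fv c' a' * Amat m fv c a) := by
  constructor
  · intro x u v z w
    rw [RMatE_eq m f hf hfpos x u v, RMatE_eq m f hf hfpos x z w]
    exact Amat_comm m _ _ _ _ _
  · intro fv c c' a a'
    exact Amat_comm m fv c c' a a'
end
end

section
/- Every Egorov space is geodesically complete: every geodesic of (ℝⁿ, g_f) extends to all of ℝ. Equivalently, the geodesic equations ẍ_i + (f'/f) ẋ_i ẋ_n = 0 (i ≤ n-2), ẍ_{n-1} - (f'/2) Σ_{i≤n-2} ẋ_i² = 0, ẍ_n = 0 admit solutions defined on all of ℝ for any initial conditions. -/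
noncomputable section

lemma gamma_split (m : ℕ) (f : ℝ → ℝ) (x : Fin (m + 3) → ℝ) (k i j : Fin (m + 3)) :
    ΓE m f x k i j =
      (if (i : ℕ) < m + 1 ∧ j = i ∧ k = penIdx m then -(deriv f (x (lastIdx m)) / 2) else 0)
      + (if (i : ℕ) < m + 1 ∧ j = lastIdx m ∧ k = i then
          deriv f (x (lastIdx m)) / (2 * f (x (lastIdx m))) else 0)
      + (if (j : ℕ) < m + 1 ∧ i = lastIdx m ∧ k = j then
          deriv f (x (lastIdx m)) / (2 * f (x (lastIdx m))) else 0) := by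
  unfold ΓE
  split_ifs <;> simp_all [Fin.ext_iff, lastIdx, penIdx] <;> omega

lemma sumGamma (m : ℕ) (f : ℝ → ℝ) (x : Fin (m + 3) → ℝ) (k : Fin (m + 3))
    (a : Fin (m + 3) → ℝ) :
    ∑ i, ∑ j, ΓE m f x k i j * a i * a j =
      (if (k : ℕ) < m + 1 then
        (deriv f (x (lastIdx m)) / f (x (lastIdx m))) * (a k * a (lastIdx m)) else 0)
      + (if (k : ℕ) = m + 1 then
          -(deriv f (x (lastIdx m)) / 2) * ∑ i : Fin (m+3), (if (i : ℕ) < m + 1 then (a i) ^ 2 else 0)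
        else 0) := by
  set d := deriv f (x (lastIdx m)) with hd
  set F := f (x (lastIdx m)) with hF
  have h1 : ∀ i : Fin (m+3), ∑ j, (if (i : ℕ) < m + 1 ∧ j = i ∧ k = penIdx m then -(d/2) else 0) * a i * a j
      = if (i : ℕ) < m + 1 ∧ k = penIdx m then -(d/2) * a i * a i else 0 := by
    intro i
    rw [Finset.sum_eq_single i]
    · split_ifs <;> simp_all <;> ring
    · intro j _ hj; simp [hj]
    · simp
  have h2 : ∀ i : Fin (m+3), ∑ j, (if (i : ℕ) < m + 1 ∧ j = lastIdx m ∧ k = i then d/(2*F) else 0) * a i * a j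
      = if (i : ℕ) < m + 1 ∧ k = i then d/(2*F) * a i * a (lastIdx m) else 0 := by
    intro i
    rw [Finset.sum_eq_single (lastIdx m)]
    · split_ifs <;> simp_all <;> ring
    · intro j _ hj; simp [hj]
    · simp
  have h3 : ∀ i : Fin (m+3), ∑ j : Fin (m+3), (if (j : ℕ) < m + 1 ∧ i = lastIdx m ∧ k = j then d/(2*F) else 0) * a i * a j
      = if (k : ℕ) < m + 1 ∧ i = lastIdx m then d/(2*F) * a i * a k else 0 := by
    intro i
    rw [Finset.sum_eq_single k]
    · split_ifs <;> simp_all <;> ring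
    · intro j _ hj; simp [hj, Ne.symm hj]
    · simp
  have key : ∀ i : Fin (m+3), ∑ j, ΓE m f x k i j * a i * a j
      = (if (i : ℕ) < m + 1 ∧ k = penIdx m then -(d/2) * a i * a i else 0)
        + (if (i : ℕ) < m + 1 ∧ k = i then d/(2*F) * a i * a (lastIdx m) else 0)
        + (if (k : ℕ) < m + 1 ∧ i = lastIdx m then d/(2*F) * a i * a k else 0) := by
    intro i
    rw [← h1 i, ← h2 i, ← h3 i, ← Finset.sum_add_distrib, ← Finset.sum_add_distrib]
    refine Finset.sum_congr rfl fun j _ => ?_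
    rw [gamma_split]; ring
  rw [Finset.sum_congr rfl fun i _ => key i]
  rw [Finset.sum_add_distrib, Finset.sum_add_distrib]
  have e1 : ∑ i : Fin (m+3), (if (i : ℕ) < m + 1 ∧ k = penIdx m then -(d/2) * a i * a i else 0)
      = if (k : ℕ) = m + 1 then -(d/2) * ∑ i : Fin (m+3), (if (i : ℕ) < m + 1 then (a i)^2 else 0) else 0 := by
    by_cases hk : k = penIdx m
    · have hkn : (k : ℕ) = m + 1 := by simp [hk, penIdx]
      rw [if_pos hkn, Finset.mul_sum]
      refine Finset.sum_congr rfl fun i _ => ?_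
      simp only [hk, and_true]
      split_ifs <;> ring
    · have : (k : ℕ) ≠ m + 1 := by
        intro h; exact hk (Fin.ext (by simp [penIdx, h]))
      simp [hk, this]
  have e2 : ∑ i : Fin (m+3), (if (i : ℕ) < m + 1 ∧ k = i then d/(2*F) * a i * a (lastIdx m) else 0)
      = if (k : ℕ) < m + 1 then d/(2*F) * a k * a (lastIdx m) else 0 := by
    rw [Finset.sum_eq_single k]
    · simp
    · intro i _ hi; exact if_neg fun h => hi h.2.symm
    · simp
  have e3 : ∑ i : Fin (m+3), (if (k : ℕ) < m + 1 ∧ i = lastIdx m then d/(2*F) * a i * a k else 0)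
      = if (k : ℕ) < m + 1 then d/(2*F) * a (lastIdx m) * a k else 0 := by
    rw [Finset.sum_eq_single (lastIdx m)]
    · simp
    · intro i _ hi; exact if_neg fun h => hi h.2
    · simp
  rw [e1, e2, e3]
  have h2F : d/(2*F) * a k * a (lastIdx m) + d/(2*F) * a (lastIdx m) * a k
      = (d / F) * (a k * a (lastIdx m)) := by
    rw [div_mul_eq_div_div_swap]
    ring
  split_ifs <;> (try omega) <;> linarith [h2F]

/-- every Egorov space is geodesically complete: for any initial position
`p` and initial velocity `v` there is a curve `γ : ℝ → ℝⁿ` defined on all of `ℝ`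
satisfying the geodesic equations of `g_f` with those initial conditions. -/
theorem egorov_geodesically_complete (m : ℕ) (f : ℝ → ℝ) (hf : ContDiff ℝ (⊤ : ℕ∞) f)
    (hfpos : ∀ t, 0 < f t) :
    ∀ p v : Fin (m + 3) → ℝ, ∃ γ : ℝ → Fin (m + 3) → ℝ,
      γ 0 = p ∧
      (∀ k : Fin (m + 3), deriv (fun s => γ s k) 0 = v k) ∧
      (∀ (t : ℝ) (k : Fin (m + 3)),
        deriv (deriv (fun s => γ s k)) t
          + (∑ i, ∑ j, ΓE m f (γ t) k i j *
              deriv (fun s => γ s i) t * deriv (fun s => γ s j) t) = 0) := by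
  intro p v
  classical
  set c := f (p (lastIdx m)) with hcdef
  have hcne : c ≠ 0 := (hfpos _).ne'
  set xn : ℝ → ℝ := fun t => p (lastIdx m) + v (lastIdx m) * t with hxndef
  have hxnd : ∀ t, HasDerivAt xn (v (lastIdx m)) t := fun t => by
    exact (((hasDerivAt_id t).const_mul (v (lastIdx m))).const_add (p (lastIdx m))).congr_deriv (mul_one _)
  have hxnc : Continuous xn := continuous_const.add (continuous_const.mul continuous_id)
  have hfd : Differentiable ℝ f := hf.differentiable (by simp)
  have hfc : Continuous f := hfd.continuous
  have hf'c : Continuous (deriv f) := hf.continuous_deriv (by simp)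
  set F : ℝ → ℝ := fun t => f (xn t) with hFdef
  have hFpos : ∀ t, 0 < F t := fun t => hfpos _
  have hFne : ∀ t, F t ≠ 0 := fun t => (hFpos t).ne'
  have hFc : Continuous F := hfc.comp hxnc
  have hFd : ∀ t, HasDerivAt F (v (lastIdx m) * deriv f (xn t)) t := fun t => by
    exact ((hfd (xn t)).hasDerivAt.comp t (hxnd t)).congr_deriv (mul_comm _ _)
  have hGc : Continuous (fun t => (F t)⁻¹) := hFc.inv₀ hFne
  set I : ℝ → ℝ := fun t => ∫ s in (0:ℝ)..t, (F s)⁻¹ with hIdef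
  have hId : ∀ t, HasDerivAt I ((F t)⁻¹) t := fun t =>
    (hGc.integral_hasStrictDerivAt 0 t).hasDerivAt
  set K : ℝ := ∑ i : Fin (m + 3), (if (i : ℕ) < m + 1 then (v i) ^ 2 else 0) with hKdef
  set w : ℝ → ℝ := fun t => (deriv f (xn t) / 2) * (K * (c * (F t)⁻¹) ^ 2) with hwdef
  have hwc : Continuous w := by
    apply Continuous.mul
    · exact (hf'c.comp hxnc).div_const 2
    · exact continuous_const.mul ((continuous_const.mul hGc).pow 2)
  set W : ℝ → ℝ := fun s => ∫ u in (0:ℝ)..s, w u with hWdef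
  have hWd : ∀ s, HasDerivAt W (w s) s := fun s =>
    (hwc.integral_hasStrictDerivAt 0 s).hasDerivAt
  have hWc : Continuous W := by
    have : Differentiable ℝ W := fun s => (hWd s).differentiableAt
    exact this.continuous
  set J : ℝ → ℝ := fun t => ∫ s in (0:ℝ)..t, W s with hJdef
  have hJd : ∀ t, HasDerivAt J (W t) t := fun t =>
    (hWc.integral_hasStrictDerivAt 0 t).hasDerivAt
  set γ : ℝ → Fin (m + 3) → ℝ := fun t k =>
    if (k : ℕ) < m + 1 then p k + v k * c * I t
    else if (k : ℕ) = m + 1 then p k + v k * t + J t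
    else p k + v k * t with hγdef
  have hI0 : I 0 = 0 := by rw [hIdef]; simp
  have hW0 : W 0 = 0 := by rw [hWdef]; simp
  have hJ0 : J 0 = 0 := by rw [hJdef]; simp
  have hF0 : F 0 = c := by rw [hFdef, hcdef, hxndef]; simp
  have hd1 : ∀ (k : Fin (m + 3)) (t : ℝ), HasDerivAt (fun s => γ s k)
      (if (k : ℕ) < m + 1 then v k * c * (F t)⁻¹
        else if (k : ℕ) = m + 1 then v k + W t else v k) t := by
    intro k t
    by_cases hk : (k : ℕ) < m + 1
    · simp only [hγdef, if_pos hk]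
      simpa [mul_assoc] using ((hId t).const_mul (v k * c)).const_add (p k)
    · by_cases hk2 : (k : ℕ) = m + 1
      · simp only [hγdef, if_neg hk, if_pos hk2]
        exact (((hasDerivAt_id t).const_mul (v k)).const_add (p k)).add (hJd t) |>.congr_deriv
          (by ring)
      · simp only [hγdef, if_neg hk, if_neg hk2]
        simpa using ((hasDerivAt_id t).const_mul (v k)).const_add (p k)
  have hVel : ∀ k : Fin (m + 3), (deriv fun s => γ s k) = fun t =>
      (if (k : ℕ) < m + 1 then v k * c * (F t)⁻¹
        else if (k : ℕ) = m + 1 then v k + W t else v k) :=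
    fun k => funext fun t => (hd1 k t).deriv
  have hd2 : ∀ (k : Fin (m + 3)) (t : ℝ), HasDerivAt (fun t =>
      (if (k : ℕ) < m + 1 then v k * c * (F t)⁻¹
        else if (k : ℕ) = m + 1 then v k + W t else v k))
      (if (k : ℕ) < m + 1 then v k * c * (-(v (lastIdx m) * deriv f (xn t)) / F t ^ 2)
        else if (k : ℕ) = m + 1 then w t else 0) t := by
    intro k t
    by_cases hk : (k : ℕ) < m + 1
    · simp only [if_pos hk]
      simpa [mul_assoc] using ((hFd t).inv (hFne t)).const_mul (v k * c)
    · by_cases hk2 : (k : ℕ) = m + 1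
      · simp only [if_neg hk, if_pos hk2]
        exact (hWd t).const_add (v k)
      · simp only [if_neg hk, if_neg hk2]
        exact hasDerivAt_const t _
  have hlast : ∀ t, γ t (lastIdx m) = xn t := by
    intro t
    simp only [hγdef, lastIdx]
    norm_num [hxndef, lastIdx]
  refine ⟨γ, ?_, ?_, ?_⟩
  · funext k
    simp only [hγdef, hI0, hJ0]
    split_ifs <;> ring
  · intro k
    rw [hVel k]
    simp only [hF0, hW0]
    split_ifs with h1 h2
    · field_simp
    · ring
    · rfl
  · intro t k
    simp only [hVel]
    rw [(hd2 k t).deriv, sumGamma]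
    rw [hlast t]
    have hlk : ¬ ((lastIdx m : ℕ) < m + 1) := by simp [lastIdx]
    have hlk2 : ¬ ((lastIdx m : ℕ) = m + 1) := by simp [lastIdx]
    simp only [if_neg hlk, if_neg hlk2]
    by_cases hk : (k : ℕ) < m + 1
    · simp only [if_pos hk, if_neg (by omega : ¬ ((k:ℕ) = m + 1)), add_zero]
      have := hFne t
      field_simp
      rw [show f (xn t) = F t from rfl, div_self this]; ring
    · by_cases hk2 : (k : ℕ) = m + 1
      · simp only [if_neg hk, if_pos hk2, zero_add]
        have hsum : (∑ i : Fin (m + 3), if (i : ℕ) < m + 1 then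
            (if (i : ℕ) < m + 1 then v i * c * (F t)⁻¹
              else if (i : ℕ) = m + 1 then v i + W t else v i) ^ 2 else 0)
            = K * (c * (F t)⁻¹) ^ 2 := by
          rw [hKdef, Finset.sum_mul]
          refine Finset.sum_congr rfl fun i _ => ?_
          split_ifs with h
          · ring
          · exact (zero_mul _).symm
        rw [hsum, hwdef]
        ring
      · simp only [if_neg hk, if_neg hk2]
        ring
end
end
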